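/- arXiv:2502.00676 — 3 statements merged into one kernel-verified Lean document; each statement's English description precedes it below -/
import Mathlib

section
/- Suppose a finite family of non-empty intervals {I_v : v ∈ V} has width k (at most k intervals share any common point), and S ⊆ V is a subset such that the union of {I_v : v ∈ S} covers the interval [min_v L_v, max_v R_v]. Then the restricted family {I_v : v ∈ V \ S} has width at most k − 1. -/
/-- If a finite family of non-empty intervals has width `k` and a subset `S` of the
vertices has intervals covering the whole range `[min L, max R]`, then the family
restricted to the complement of `S` has width at most `k - 1`. -/
theorem stmt_3 {V : Type*} [Fintype V] [Nonempty V] [DecidableEq V] (k : ℕ)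
    (L R : V → ℤ) (hLR : ∀ v, L v ≤ R v) (S : Set V) [DecidablePred (· ∈ S)]
    (hwidth : ∀ x : ℤ, (Finset.univ.filter (fun v => L v ≤ x ∧ x ≤ R v)).card ≤ k)
    (hcover : ∀ x : ℤ, Finset.univ.inf' Finset.univ_nonempty L ≤ x →
      x ≤ Finset.univ.sup' Finset.univ_nonempty R → ∃ s ∈ S, L s ≤ x ∧ x ≤ R s) :
    ∀ x : ℤ, (Finset.univ.filter (fun v => v ∉ S ∧ L v ≤ x ∧ x ≤ R v)).card ≤ k - 1 := by
  intro x
  rcases (Finset.univ.filter (fun v => v ∉ S ∧ L v ≤ x ∧ x ≤ R v)).eq_empty_or_nonempty with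
    he | ⟨v, hv⟩
  · simp [he]
  · simp only [Finset.mem_filter] at hv
    obtain ⟨-, hvS, hvL, hvR⟩ := hv
    obtain ⟨s, hsS, hsL, hsR⟩ := hcover x
      (le_trans (Finset.inf'_le _ (Finset.mem_univ v)) hvL)
      (le_trans hvR (Finset.le_sup' _ (Finset.mem_univ v)))
    have hsub : (Finset.univ.filter (fun v => v ∉ S ∧ L v ≤ x ∧ x ≤ R v)) ⊆
        (Finset.univ.filter (fun v => L v ≤ x ∧ x ≤ R v)).erase s := by
      intro w hw
      simp only [Finset.mem_filter, Finset.mem_erase] at hw ⊢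
      exact ⟨fun h => hw.2.1 (h ▸ hsS), Finset.mem_univ w, hw.2.2⟩
    calc (Finset.univ.filter (fun v => v ∉ S ∧ L v ≤ x ∧ x ≤ R v)).card
        ≤ ((Finset.univ.filter (fun v => L v ≤ x ∧ x ≤ R v)).erase s).card :=
          Finset.card_le_card hsub
      _ = (Finset.univ.filter (fun v => L v ≤ x ∧ x ≤ R v)).card - 1 :=
          Finset.card_erase_of_mem (by simp [hsL, hsR])
      _ ≤ k - 1 := Nat.sub_le_sub_right (hwidth x) 1
end

section
/- A graph G has a path decomposition of width at most k (i.e., all bags of size at most k+1) covering all vertices if and only if G has an interval representation in which at most k+1 intervals share a common point. -/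
/-- A graph has a path decomposition of width at most `k` (all bags of size at most
`k+1`, covering all vertices) iff it has an interval representation in which at most
`k+1` intervals share a common point. -/
theorem stmt_10 {V : Type*} [Fintype V] [DecidableEq V] (G : SimpleGraph V) (k : ℕ) :
    (∃ (s : ℕ) (X : Fin s → Finset V),
      (∀ u v : V, G.Adj u v → ∃ i, u ∈ X i ∧ v ∈ X i) ∧
      (∀ i j l : Fin s, i ≤ j → j ≤ l → X i ∩ X l ⊆ X j) ∧
      (∀ v : V, ∃ i, v ∈ X i) ∧
      (∀ i, (X i).card ≤ k + 1)) ↔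
    (∃ L R : V → ℤ, (∀ v, L v ≤ R v) ∧
      (∀ u v : V, G.Adj u v →
        (Set.Icc (L u) (R u) ∩ Set.Icc (L v) (R v)).Nonempty) ∧
      (∀ x : ℤ, (Finset.univ.filter (fun v => L v ≤ x ∧ x ≤ R v)).card ≤ k + 1)) := by
  constructor
  · rintro ⟨s, X, hadj, hinterp, hcov, hcard⟩
    have hS : ∀ v : V, (Finset.univ.filter (fun i : Fin s => v ∈ X i)).Nonempty := by
      intro v
      obtain ⟨i, hi⟩ := hcov v
      exact ⟨i, by simp [hi]⟩
    set Sv : V → Finset (Fin s) := fun v => Finset.univ.filter (fun i : Fin s => v ∈ X i)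
      with hSv
    have cast_le : ∀ {a b : Fin s}, a ≤ b → ((a : ℕ) : ℤ) ≤ ((b : ℕ) : ℤ) := by
      intro a b hab
      exact_mod_cast Fin.le_iff_val_le_val.mp hab
    refine ⟨fun v => ((Sv v).min' (hS v) : ℤ), fun v => ((Sv v).max' (hS v) : ℤ), ?_, ?_, ?_⟩
    · intro v
      exact cast_le ((Sv v).min'_le _ ((Sv v).max'_mem (hS v)))
    · intro u v huv
      obtain ⟨i, hu, hv⟩ := hadj u v huv
      have hiu : i ∈ Sv u := by simp [hSv, hu]
      have hiv : i ∈ Sv v := by simp [hSv, hv]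
      exact ⟨(i : ℤ), ⟨cast_le ((Sv u).min'_le i hiu), cast_le ((Sv u).le_max' i hiu)⟩,
        cast_le ((Sv v).min'_le i hiv), cast_le ((Sv v).le_max' i hiv)⟩
    · intro x
      by_cases hne : (Finset.univ.filter
          (fun v => ((Sv v).min' (hS v) : ℤ) ≤ x ∧ x ≤ ((Sv v).max' (hS v) : ℤ))).Nonempty
      · obtain ⟨v0, hv0⟩ := hne
        simp only [Finset.mem_filter] at hv0
        have h0 : (0 : ℤ) ≤ x := le_trans (by positivity) hv0.2.1
        have hxs : x.toNat < s := by
          have := hv0.2.2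
          have hmax : ((Sv v0).max' (hS v0) : ℕ) < s := ((Sv v0).max' (hS v0)).isLt
          omega
        set i : Fin s := ⟨x.toNat, hxs⟩ with hi
        have hix : (i : ℤ) = x := by simp [hi]; omega
        have hsub : (Finset.univ.filter
            (fun v => ((Sv v).min' (hS v) : ℤ) ≤ x ∧ x ≤ ((Sv v).max' (hS v) : ℤ))) ⊆ X i := by
          intro w hw
          simp only [Finset.mem_filter] at hw
          have h1 : (Sv w).min' (hS w) ≤ i := by
            rw [Fin.le_iff_val_le_val]
            have := hw.2.1
            omega
          have h2 : i ≤ (Sv w).max' (hS w) := by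
            rw [Fin.le_iff_val_le_val]
            have := hw.2.2
            have : ((i : Fin s) : ℤ) ≤ ((Sv w).max' (hS w) : ℤ) := by rw [hix]; exact hw.2.2
            exact_mod_cast this
          have hwmin : w ∈ X ((Sv w).min' (hS w)) := by
            have := (Sv w).min'_mem (hS w)
            simpa [hSv] using this
          have hwmax : w ∈ X ((Sv w).max' (hS w)) := by
            have := (Sv w).max'_mem (hS w)
            simpa [hSv] using this
          exact hinterp _ i _ h1 h2 (Finset.mem_inter.mpr ⟨hwmin, hwmax⟩)
        calc _ ≤ (X i).card := Finset.card_le_card hsub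
          _ ≤ k + 1 := hcard i
      · rw [Finset.not_nonempty_iff_eq_empty] at hne
        simp [hne]
  · rintro ⟨L, R, hLR, hadj, hw⟩
    cases isEmpty_or_nonempty V with
    | inl h =>
      refine ⟨0, Fin.elim0, fun u => isEmptyElim u, fun i => i.elim0,
        fun v => isEmptyElim v, fun i => i.elim0⟩
    | inr h =>
      set m : ℤ := (Finset.univ.image L).min' (by simp [Finset.image_nonempty]) with hm
      set M : ℤ := (Finset.univ.image R).max' (by simp [Finset.image_nonempty]) with hM
      have hmle : ∀ v, m ≤ L v := fun v =>
        Finset.min'_le _ _ (Finset.mem_image_of_mem L (Finset.mem_univ v))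
      have hleM : ∀ v, R v ≤ M := fun v =>
        Finset.le_max' _ _ (Finset.mem_image_of_mem R (Finset.mem_univ v))
      refine ⟨(M - m).toNat + 1,
        fun i => Finset.univ.filter (fun v => L v ≤ m + (i : ℤ) ∧ m + (i : ℤ) ≤ R v),
        ?_, ?_, ?_, ?_⟩
      · intro u v huv
        obtain ⟨x, ⟨hxu1, hxu2⟩, hxv1, hxv2⟩ := hadj u v huv
        have h1 : m ≤ x := le_trans (hmle u) hxu1
        have h2 : x ≤ M := le_trans hxu2 (hleM u)
        refine ⟨⟨(x - m).toNat, by omega⟩, ?_, ?_⟩ <;>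
          · simp only [Finset.mem_filter, Finset.mem_univ, true_and]
            constructor <;> [skip; skip] <;>
              · omega
      · intro i j l hij hjl w hw'
        simp only [Finset.mem_inter, Finset.mem_filter, Finset.mem_univ, true_and] at hw'
        simp only [Finset.mem_filter, Finset.mem_univ, true_and]
        have h1 : (i : ℤ) ≤ (j : ℤ) := by exact_mod_cast Fin.le_iff_val_le_val.mp hij
        have h2 : (j : ℤ) ≤ (l : ℤ) := by exact_mod_cast Fin.le_iff_val_le_val.mp hjl
        constructor
        · linarith [hw'.1.1]
        · linarith [hw'.2.2]
      · intro v
        have h1 : m ≤ L v := hmle v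
        have h2 : L v ≤ M := le_trans (hLR v) (hleM v)
        refine ⟨⟨(L v - m).toNat, by omega⟩, ?_⟩
        simp only [Finset.mem_filter, Finset.mem_univ, true_and]
        constructor <;>
          · first
              | omega
              | (have := hLR v; omega)
      · intro i
        exact hw (m + (i : ℤ))
end

section
/- Let G = (V,E) be a graph with interval representation of width k, and let S ⊆ V be a set whose intervals cover the full range [min L, max R]. Then for every connected component C of G − S, the restricted interval representation {I_v : v ∈ C} has width at most k − 1, and moreover the family of component intervals {I_C : C a component of G − S}, where I_C = ∪_{v ∈ C} I_v, has width at most k − 1 and can therefore be partitioned into k − 1 subfamilies of pairwise-disjoint intervals. -/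
/-- `x` lies in the interval `I_C` of the connected component `c` of `G - S`,
where `I_C` is the union (equivalently, the convex hull) of the intervals of the
vertices of the component. -/
def compIntervalMem {V : Type*} (G : SimpleGraph V) (S : Set V) (L R : V → ℤ)
    (c : (G.induce Sᶜ).ConnectedComponent) (x : ℤ) : Prop :=
  ∃ u w : ↥(Sᶜ), (G.induce Sᶜ).connectedComponentMk u = c ∧
    (G.induce Sᶜ).connectedComponentMk w = c ∧ L u.1 ≤ x ∧ x ≤ R w.1

/-- Greedy coloring of a finite family of integer intervals of width at most `m`
into `m` classes of pairwise disjoint intervals. -/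
lemma greedy_color {ι : Type*} [Fintype ι] (ℓ r : ι → ℤ) (m : ℕ)
    (hlr : ∀ i, ℓ i ≤ r i)
    (hm : ∀ x : ℤ, {i | ℓ i ≤ x ∧ x ≤ r i}.ncard ≤ m) :
    ∃ col : ι → Fin m, ∀ i j, i ≠ j → col i = col j →
      ∀ x : ℤ, ¬((ℓ i ≤ x ∧ x ≤ r i) ∧ (ℓ j ≤ x ∧ x ≤ r j)) := by
  classical
  cases isEmpty_or_nonempty ι with
  | inl h => exact ⟨isEmptyElim, fun i => isEmptyElim i⟩
  | inr hne =>
    obtain ⟨i₀'⟩ := hne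
    have hm1 : 1 ≤ m := by
      have h2 : 0 < {i | ℓ i ≤ ℓ i₀' ∧ ℓ i₀' ≤ r i}.ncard :=
        (Set.ncard_pos (Set.toFinite _)).mpr ⟨i₀', le_refl _, hlr i₀'⟩
      have := hm (ℓ i₀')
      omega
    have key : ∀ n (s : Finset ι), s.card = n → ∃ col : ι → Fin m,
        ∀ i ∈ s, ∀ j ∈ s, i ≠ j → col i = col j →
          ∀ x : ℤ, ¬((ℓ i ≤ x ∧ x ≤ r i) ∧ (ℓ j ≤ x ∧ x ≤ r j)) := by
      intro n
      induction n with
      | zero =>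
        intro s hs
        exact ⟨fun _ => ⟨0, hm1⟩, by simp [Finset.card_eq_zero.mp hs]⟩
      | succ n ih =>
        intro s hs
        have hsne : s.Nonempty := Finset.card_pos.mp (by omega)
        obtain ⟨i₀, hi₀s, hmax⟩ := s.exists_max_image ℓ hsne
        obtain ⟨col', hcol'⟩ := ih (s.erase i₀)
          (by rw [Finset.card_erase_of_mem hi₀s, hs]; omega)
        set T := (s.erase i₀).filter (fun j => ℓ j ≤ ℓ i₀ ∧ ℓ i₀ ≤ r j) with hTdef
        have hTcard : T.card + 1 ≤ m := by
          have h1 : ((insert i₀ T : Finset ι) : Set ι) ⊆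
              {i | ℓ i ≤ ℓ i₀ ∧ ℓ i₀ ≤ r i} := by
            intro j hj
            simp only [Finset.coe_insert, Set.mem_insert_iff] at hj
            rcases hj with rfl | hj
            · exact ⟨le_refl _, hlr j⟩
            · exact (Finset.mem_filter.mp hj).2
          have h2 := Set.ncard_le_ncard h1 (Set.toFinite _)
          rw [Set.ncard_coe_finset] at h2
          have h3 : i₀ ∉ T := fun h =>
            (Finset.mem_erase.mp (Finset.mem_filter.mp h).1).1 rfl
          rw [Finset.card_insert_of_notMem h3] at h2
          exact le_trans h2 (hm (ℓ i₀))
        have hc₀ : ∃ c₀ : Fin m, c₀ ∉ T.image col' := by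
          by_contra hc
          push_neg at hc
          have hsub : (Finset.univ : Finset (Fin m)) ⊆ T.image col' :=
            fun c _ => hc c
          have h4 := Finset.card_le_card hsub
          have h5 := Finset.card_image_le (s := T) (f := col')
          simp [Finset.card_univ] at h4
          omega
        obtain ⟨c₀, hc₀⟩ := hc₀
        refine ⟨Function.update col' i₀ c₀, ?_⟩
        have disj : ∀ j ∈ s, j ≠ i₀ → col' j = c₀ → r j < ℓ i₀ := by
          intro j hj hji₀ hc
          by_contra hr'
          push_neg at hr'
          have hjT : j ∈ T := Finset.mem_filter.mpr
            ⟨Finset.mem_erase.mpr ⟨hji₀, hj⟩, hmax j hj, hr'⟩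
          exact hc₀ (Finset.mem_image.mpr ⟨j, hjT, hc⟩)
        rintro i hi j hj hij hcol x ⟨⟨hix1, hix2⟩, hjx1, hjx2⟩
        by_cases hi0 : i = i₀ <;> by_cases hj0 : j = i₀
        · exact hij (hi0.trans hj0.symm)
        · subst hi0
          rw [Function.update_self, Function.update_of_ne hj0] at hcol
          have := disj j hj hj0 hcol.symm
          omega
        · subst hj0
          rw [Function.update_self, Function.update_of_ne hi0] at hcol
          have := disj i hi hi0 hcol
          omega
        · rw [Function.update_of_ne hi0, Function.update_of_ne hj0] at hcol
          exact hcol' i (Finset.mem_erase.mpr ⟨hi0, hi⟩)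
            j (Finset.mem_erase.mpr ⟨hj0, hj⟩) hij hcol x
            ⟨⟨hix1, hix2⟩, hjx1, hjx2⟩
    obtain ⟨col, hcol⟩ := key _ Finset.univ rfl
    exact ⟨col, fun i j hij hc =>
      hcol i (Finset.mem_univ i) j (Finset.mem_univ j) hij hc⟩

set_option maxHeartbeats 1600000 in
/-- Let `G` have an interval representation of width `k`, and let `S` be a set of
vertices whose intervals cover the full range `[min L, max R]`.  Then (a) the
intervals of the vertices outside `S` have width at most `k-1`; (b) the family of
component intervals `I_C` of the connected components of `G - S` has width at most
`k-1`; and (c) the components can be partitioned into `k-1` classes with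
pairwise-disjoint component intervals. -/
theorem stmt_17 {V : Type*} [Fintype V] [Nonempty V] (G : SimpleGraph V)
    (k : ℕ) (hk : 1 ≤ k) (L R : V → ℤ) (hLR : ∀ v, L v ≤ R v)
    (hadj : ∀ u v : V, G.Adj u v →
      (Set.Icc (L u) (R u) ∩ Set.Icc (L v) (R v)).Nonempty)
    (S : Set V)
    (hwidth : ∀ x : ℤ, {v : V | L v ≤ x ∧ x ≤ R v}.ncard ≤ k)
    (hcover : ∀ x : ℤ, Finset.univ.inf' Finset.univ_nonempty L ≤ x →
      x ≤ Finset.univ.sup' Finset.univ_nonempty R → ∃ s ∈ S, L s ≤ x ∧ x ≤ R s) :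
    (∀ x : ℤ, {v : V | v ∉ S ∧ L v ≤ x ∧ x ≤ R v}.ncard ≤ k - 1) ∧
    (∀ x : ℤ,
      {c : (G.induce Sᶜ).ConnectedComponent | compIntervalMem G S L R c x}.ncard
        ≤ k - 1) ∧
    (∃ col : (G.induce Sᶜ).ConnectedComponent → Fin (k - 1),
      ∀ c c' : (G.induce Sᶜ).ConnectedComponent, c ≠ c' → col c = col c' →
        ∀ x : ℤ, ¬ (compIntervalMem G S L R c x ∧ compIntervalMem G S L R c' x)) := by
  classical
  -- Part (a)
  have partA : ∀ x : ℤ, {v : V | v ∉ S ∧ L v ≤ x ∧ x ≤ R v}.ncard ≤ k - 1 := by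
    intro x
    by_cases hne : {v : V | v ∉ S ∧ L v ≤ x ∧ x ≤ R v}.Nonempty
    · obtain ⟨v₀, hv₀S, hv₀L, hv₀R⟩ := hne
      obtain ⟨s, hsS, hsL, hsR⟩ := hcover x
        (le_trans (Finset.inf'_le L (Finset.mem_univ v₀)) hv₀L)
        (le_trans hv₀R (Finset.le_sup' R (Finset.mem_univ v₀)))
      have hsub : insert s {v : V | v ∉ S ∧ L v ≤ x ∧ x ≤ R v} ⊆
          {v : V | L v ≤ x ∧ x ≤ R v} := by
        rintro v (rfl | ⟨_, h⟩)
        · exact ⟨hsL, hsR⟩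
        · exact h
      have h1 : (insert s {v : V | v ∉ S ∧ L v ≤ x ∧ x ≤ R v}).ncard =
          {v : V | v ∉ S ∧ L v ≤ x ∧ x ≤ R v}.ncard + 1 :=
        Set.ncard_insert_of_notMem (fun h => h.1 hsS) (Set.toFinite _)
      have h2 := Set.ncard_le_ncard hsub (Set.toFinite _)
      have h3 := hwidth x
      omega
    · rw [Set.not_nonempty_iff_eq_empty] at hne
      simp [hne]
  -- Walk lemma: if `x ∈ [L u, R w]` and `u, w` connected, some vertex of the
  -- component covers `x`.
  have walkLem : ∀ (u w : ↥Sᶜ) (_ : (G.induce Sᶜ).Walk u w) (x : ℤ),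
      L u.1 ≤ x → x ≤ R w.1 →
      ∃ v : ↥Sᶜ, (G.induce Sᶜ).Reachable u v ∧ L v.1 ≤ x ∧ x ≤ R v.1 := by
    intro u w p
    induction p with
    | nil => exact fun x h1 h2 => ⟨_, SimpleGraph.Reachable.refl _, h1, h2⟩
    | @cons a b w hab p ih =>
      intro x h1 h2
      by_cases hx : x ≤ R a.1
      · exact ⟨a, SimpleGraph.Reachable.refl _, h1, hx⟩
      · push_neg at hx
        obtain ⟨y, ⟨_, hy2⟩, hy3, _⟩ := hadj a.1 b.1 hab
        have hbx : L b.1 ≤ x := le_of_lt (lt_of_le_of_lt (le_trans hy3 hy2) hx)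
        obtain ⟨v, hr, hv1, hv2⟩ := ih x hbx h2
        exact ⟨v, (SimpleGraph.Adj.reachable hab).trans hr, hv1, hv2⟩
  -- From membership in `I_C` to an actual covering vertex of the component.
  have memChar : ∀ (c : (G.induce Sᶜ).ConnectedComponent) (x : ℤ),
      compIntervalMem G S L R c x →
      ∃ v : ↥Sᶜ, (G.induce Sᶜ).connectedComponentMk v = c ∧
        L v.1 ≤ x ∧ x ≤ R v.1 := by
    rintro c x ⟨u, w, hu, hw, hL, hR⟩
    have hr : (G.induce Sᶜ).Reachable u w :=
      (SimpleGraph.ConnectedComponent.eq).mp (hu.trans hw.symm)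
    obtain ⟨p⟩ := hr
    obtain ⟨v, hr', h1, h2⟩ := walkLem u w p x hL hR
    exact ⟨v, ((SimpleGraph.ConnectedComponent.eq).mpr hr').symm.trans hu, h1, h2⟩
  -- Part (b)
  have partB : ∀ x : ℤ,
      {c : (G.induce Sᶜ).ConnectedComponent | compIntervalMem G S L R c x}.ncard
        ≤ k - 1 := by
    intro x
    have hV : Nonempty V := inferInstance
    set f : (G.induce Sᶜ).ConnectedComponent → V := fun c =>
      if h : compIntervalMem G S L R c x then ((memChar c x h).choose : ↥Sᶜ).1
      else Classical.arbitrary V with hf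
    have hmap : ∀ c ∈ {c | compIntervalMem G S L R c x},
        f c ∈ {v : V | v ∉ S ∧ L v ≤ x ∧ x ≤ R v} := by
      intro c hc
      have hc' : compIntervalMem G S L R c x := hc
      obtain ⟨h1, h2, h3⟩ := (memChar c x hc').choose_spec
      simp only [hf]
      rw [dif_pos hc']
      exact ⟨(memChar c x hc').choose.2, h2, h3⟩
    have hinj : Set.InjOn f {c | compIntervalMem G S L R c x} := by
      intro c hc c' hc' hcc
      have hc1 : compIntervalMem G S L R c x := hc
      have hc2 : compIntervalMem G S L R c' x := hc'
      simp only [hf] at hcc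
      rw [dif_pos hc1, dif_pos hc2] at hcc
      have h1 := (memChar c x hc1).choose_spec.1
      have h2 := (memChar c' x hc2).choose_spec.1
      exact h1.symm.trans ((congrArg _ (Subtype.ext hcc)).trans h2)
    exact le_trans (Set.ncard_le_ncard_of_injOn f hmap hinj (Set.toFinite _))
      (partA x)
  refine ⟨partA, partB, ?_⟩
  -- Part (c)
  haveI : Fintype (G.induce Sᶜ).ConnectedComponent := Fintype.ofFinite _
  have hrep : ∀ c : (G.induce Sᶜ).ConnectedComponent,
      (Finset.univ.filter
        (fun v : ↥Sᶜ => (G.induce Sᶜ).connectedComponentMk v = c)).Nonempty := by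
    intro c
    obtain ⟨v, hv⟩ := c.exists_rep
    exact ⟨v, Finset.mem_filter.mpr ⟨Finset.mem_univ _, hv⟩⟩
  set ℓ : (G.induce Sᶜ).ConnectedComponent → ℤ := fun c =>
    (Finset.univ.filter
      (fun v : ↥Sᶜ => (G.induce Sᶜ).connectedComponentMk v = c)).inf' (hrep c)
      (fun v => L v.1) with hℓ
  set r : (G.induce Sᶜ).ConnectedComponent → ℤ := fun c =>
    (Finset.univ.filter
      (fun v : ↥Sᶜ => (G.induce Sᶜ).connectedComponentMk v = c)).sup' (hrep c)
      (fun v => R v.1) with hr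
  have hmemiff : ∀ (c : (G.induce Sᶜ).ConnectedComponent) (x : ℤ),
      compIntervalMem G S L R c x ↔ (ℓ c ≤ x ∧ x ≤ r c) := by
    intro c x
    constructor
    · rintro ⟨u, w, hu, hw, h1, h2⟩
      have hmu : u ∈ Finset.univ.filter
          (fun v : ↥Sᶜ => (G.induce Sᶜ).connectedComponentMk v = c) :=
        Finset.mem_filter.mpr ⟨Finset.mem_univ _, hu⟩
      have hmw : w ∈ Finset.univ.filter
          (fun v : ↥Sᶜ => (G.induce Sᶜ).connectedComponentMk v = c) :=
        Finset.mem_filter.mpr ⟨Finset.mem_univ _, hw⟩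
      exact ⟨le_trans (Finset.inf'_le (fun v => L v.1) hmu) h1,
        le_trans h2 (Finset.le_sup' (fun v => R v.1) hmw)⟩
    · rintro ⟨h1, h2⟩
      obtain ⟨u, hu, hu'⟩ := Finset.exists_mem_eq_inf' (hrep c) (fun v : ↥Sᶜ => L v.1)
      obtain ⟨w, hw, hw'⟩ := Finset.exists_mem_eq_sup' (hrep c) (fun v : ↥Sᶜ => R v.1)
      exact ⟨u, w, (Finset.mem_filter.mp hu).2, (Finset.mem_filter.mp hw).2,
        hu' ▸ h1, hw' ▸ h2⟩
  have hlr : ∀ c, ℓ c ≤ r c := by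
    intro c
    obtain ⟨u, hu, hu'⟩ := Finset.exists_mem_eq_inf' (hrep c) (fun v : ↥Sᶜ => L v.1)
    exact le_trans (le_of_eq hu')
      (le_trans (hLR u.1) (Finset.le_sup' (fun v : ↥Sᶜ => R v.1) hu))
  have hwide : ∀ x : ℤ,
      {c : (G.induce Sᶜ).ConnectedComponent | ℓ c ≤ x ∧ x ≤ r c}.ncard ≤ k - 1 := by
    intro x
    have : {c : (G.induce Sᶜ).ConnectedComponent | ℓ c ≤ x ∧ x ≤ r c} =
        {c | compIntervalMem G S L R c x} := by
      ext c; exact (hmemiff c x).symm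
    rw [this]
    exact partB x
  obtain ⟨col, hcol⟩ := greedy_color ℓ r (k - 1) hlr hwide
  refine ⟨col, fun c c' hcc hcol' x ⟨h1, h2⟩ => ?_⟩
  exact hcol c c' hcc hcol' x ⟨(hmemiff c x).mp h1, (hmemiff c' x).mp h2⟩
end
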